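/- arXiv:1709.08958 — 3 statements merged into one kernel-verified Lean document; each statement's English description precedes it below -/
import Mathlib

section
/- Let Γ₁ and Γ₂ be commensurable subgroups of SL(2,ℝ), i.e. Γ₁ ∩ Γ₂ has finite index in both Γ₁ and Γ₂. Then Γ₁ and Γ₂ are isoaxial: ax(Γ₁) = ax(Γ₁ ∩ Γ₂) = ax(Γ₂). -/
/-!
The displacement of `z` under `g ∈ SL(2, ℝ)` is an increasing function of `‖P_g(z)‖ / Im z`,
where `P_g(z) = c z² + (d - a) z - b` is the fixed-point polynomial of `g`. By Cayley–Hamilton,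
a power `γⁿ` (`n ≠ 0`) of a hyperbolic `γ` is `a γ + b` with `a ≠ 0`, because the eigenvalues of
`γ` have distinct absolute values; hence `P_{γⁿ} = a P_γ` and `γⁿ` has the axis of `γ`, and `γⁿ`
is again hyperbolic since `disc (a γ + b) = a² disc γ`. A subgroup of finite index contains a
positive power of every element, so it has the same axes as the ambient group.
-/

open UpperHalfPlane Matrix MatrixGroups Pointwise

/-- The axis of an element `γ` of `SL(2, ℝ)`: the set of points of the upper half-plane
at which the displacement function `z ↦ dist z (γ • z)` attains its infimum over `ℍ`. -/
noncomputable def axis (γ : SL(2, ℝ)) : Set ℍ :=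
  {z : ℍ | ∀ w : ℍ, dist z (γ • z) ≤ dist w (γ • w)}

/-- The set of axes of the hyperbolic elements of a subgroup `Γ` of `SL(2, ℝ)`. -/
noncomputable def axes (Γ : Subgroup SL(2, ℝ)) : Set (Set ℍ) :=
  {P : Set ℍ | ∃ γ ∈ Γ, ((γ : Matrix (Fin 2) (Fin 2) ℝ).trace) ^ 2 > 4 ∧ P = axis γ}

open Polynomial

namespace Matrix

variable {R : Type*} [CommRing R]

lemma sq_eq_trace_smul_sub_det_smul (M : Matrix (Fin 2) (Fin 2) R) :
    M ^ 2 = M.trace • M - M.det • 1 := by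
  ext i j
  fin_cases i <;> fin_cases j <;>
    simp [sq, mul_apply, trace_fin_two, det_fin_two] <;> ring

lemma discr_smul_add_smul_one (M : Matrix (Fin 2) (Fin 2) R) (a b : R) :
    (a • M + b • 1).discr = a ^ 2 * M.discr := by
  simp [discr_fin_two, trace_fin_two, det_fin_two]
  ring

lemma pow_eq_smul_add_smul_one_of_roots {K : Type*} [Field K] {M : Matrix (Fin 2) (Fin 2) K}
    {l m : K} (hlm : l ≠ m) (hsum : l + m = M.trace) (hprod : l * m = M.det) (n : ℕ) :
    M ^ n = ((l ^ n - m ^ n) / (l - m)) • M + ((l * m ^ n - m * l ^ n) / (l - m)) • 1 := by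
  have hlm' : l - m ≠ 0 := sub_ne_zero.mpr hlm
  induction n with
  | zero => simp [hlm']
  | succ n ih =>
    rw [pow_succ, ih, add_mul, smul_mul_assoc, smul_mul_assoc, one_mul, ← sq,
      sq_eq_trace_smul_sub_det_smul, ← hsum, ← hprod]
    match_scalars <;> field_simp <;> ring

theorem IsHyperbolic.exists_pow_eq_smul_add_smul_one {M : Matrix (Fin 2) (Fin 2) ℝ}
    (hM : M.IsHyperbolic) (hdet : 0 < M.det) {n : ℕ} (hn : n ≠ 0) :
    ∃ a b : ℝ, a ≠ 0 ∧ M ^ n = a • M + b • 1 := by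
  obtain ⟨s, hs, hs2⟩ : ∃ s, 0 < s ∧ s ^ 2 = M.discr :=
    ⟨√M.discr, Real.sqrt_pos.mpr hM, Real.sq_sqrt hM.le⟩
  have hlm : (M.trace + s) / 2 ≠ (M.trace - s) / 2 := by intro h; linarith
  have hprod : (M.trace + s) / 2 * ((M.trace - s) / 2) = M.det := by
    rw [discr_fin_two] at hs2
    linear_combination -hs2 / 4
  refine ⟨_, _, ?_, pow_eq_smul_add_smul_one_of_roots hlm (by ring) hprod n⟩
  refine div_ne_zero (sub_ne_zero.mpr fun h ↦ ?_) (sub_ne_zero.mpr hlm)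
  obtain h | ⟨h, -⟩ := (pow_eq_pow_iff_of_ne_zero hn).mp h
  · exact hlm h
  · nlinarith

theorem IsHyperbolic.pow {M : Matrix (Fin 2) (Fin 2) ℝ} (hM : M.IsHyperbolic) (hdet : 0 < M.det)
    {n : ℕ} (hn : n ≠ 0) : (M ^ n).IsHyperbolic := by
  obtain ⟨a, b, ha, hMn⟩ := hM.exists_pow_eq_smul_add_smul_one hdet hn
  rw [IsHyperbolic, hMn, discr_smul_add_smul_one]
  exact mul_pos (by positivity) hM

lemma GeneralLinearGroup.fixpointPolynomial_eq_C_mul {g h : GL (Fin 2) R} {a b : R}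
    (hgh : (h : Matrix (Fin 2) (Fin 2) R) = a • (g : Matrix (Fin 2) (Fin 2) R) + b • 1) :
    h.fixpointPolynomial = C a * g.fixpointPolynomial := by
  simp [fixpointPolynomial, hgh]
  ring

end Matrix

namespace UpperHalfPlane

lemma coe_smul_sub_coe (g : SL(2, ℝ)) (z : ℍ) :
    ((g • z : ℍ) : ℂ) - z =
      -aeval (z : ℂ) (g : GL (Fin 2) ℝ).fixpointPolynomial / denom g z := by
  have hz := denom_ne_zero g z
  rw [show g • z = (g : GL (Fin 2) ℝ) • z from rfl, coe_smul_of_det_pos (by simp)]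
  field_simp
  simp [num, denom, GeneralLinearGroup.fixpointPolynomial]
  ring

lemma cosh_dist_smul (g : SL(2, ℝ)) (z : ℍ) :
    Real.cosh (dist z (g • z)) =
      1 + (‖aeval (z : ℂ) (g : GL (Fin 2) ℝ).fixpointPolynomial‖ / z.im) ^ 2 / 2 := by
  have hz := denom_ne_zero g z
  have him : (g • z).im = z.im / Complex.normSq (denom g z) := by
    change ((g : GL (Fin 2) ℝ) • z).im = _
    simpa using im_smul_eq_div_normSq (g : GL (Fin 2) ℝ) z
  rw [cosh_dist, dist_comm, Complex.dist_eq, coe_smul_sub_coe, him, norm_div, norm_neg,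
    ← Complex.sq_norm]
  have hz_im := z.im_pos
  have hz_norm : ‖denom g z‖ ≠ 0 := norm_ne_zero_iff.mpr hz
  field_simp

lemma dist_smul_le_dist_smul_iff (g : SL(2, ℝ)) (z w : ℍ) :
    dist z (g • z) ≤ dist w (g • w) ↔
      ‖aeval (z : ℂ) (g : GL (Fin 2) ℝ).fixpointPolynomial‖ / z.im ≤
        ‖aeval (w : ℂ) (g : GL (Fin 2) ℝ).fixpointPolynomial‖ / w.im := by
  have hcosh := Real.cosh_le_cosh (x := dist z (g • z)) (y := dist w (g • w))
  rwa [abs_of_nonneg dist_nonneg, abs_of_nonneg dist_nonneg, cosh_dist_smul, cosh_dist_smul,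
    add_le_add_iff_left, div_le_div_iff_of_pos_right two_pos,
    sq_le_sq₀ (by positivity) (by positivity), Iff.comm] at hcosh

end UpperHalfPlane

lemma axis_eq_of_fixpointPolynomial_eq_C_mul {g h : SL(2, ℝ)} {a : ℝ} (ha : a ≠ 0)
    (hgh : (h : GL (Fin 2) ℝ).fixpointPolynomial = C a * (g : GL (Fin 2) ℝ).fixpointPolynomial) :
    axis h = axis g := by
  ext z
  simp only [axis, Set.mem_ofPred, dist_smul_le_dist_smul_iff, hgh, map_mul, aeval_C,
    norm_mul, Complex.coe_algebraMap, Complex.norm_real, mul_div_assoc,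
    mul_le_mul_iff_right₀ (norm_pos_iff.mpr ha)]

lemma isHyperbolic_iff_four_lt_sq_trace (g : SL(2, ℝ)) :
    (g : Matrix (Fin 2) (Fin 2) ℝ).IsHyperbolic ↔
      4 < (g : Matrix (Fin 2) (Fin 2) ℝ).trace ^ 2 := by
  simp [IsHyperbolic, discr_fin_two]

lemma axis_pow {γ : SL(2, ℝ)} (hγ : (γ : Matrix (Fin 2) (Fin 2) ℝ).IsHyperbolic) {n : ℕ}
    (hn : n ≠ 0) :
    axis (γ ^ n) = axis γ := by
  obtain ⟨a, b, ha, hγn⟩ := hγ.exists_pow_eq_smul_add_smul_one (by simp) hn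
  refine axis_eq_of_fixpointPolynomial_eq_C_mul ha
    (GeneralLinearGroup.fixpointPolynomial_eq_C_mul (b := b) ?_)
  simpa using hγn

lemma axes_eq_of_le_of_relIndex_ne_zero {H K : Subgroup SL(2, ℝ)} (hHK : H ≤ K)
    (hK : H.relIndex K ≠ 0) : axes H = axes K := by
  refine Set.Subset.antisymm ?_ ?_
  · rintro _ ⟨γ, hγ, htr, rfl⟩
    exact ⟨γ, hHK hγ, htr, rfl⟩
  · rintro _ ⟨γ, hγ, htr, rfl⟩
    rw [gt_iff_lt, ← isHyperbolic_iff_four_lt_sq_trace] at htr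
    obtain ⟨n, hn, -, hγn, -⟩ := Subgroup.exists_pow_mem_of_relIndex_ne_zero hK hγ
    refine ⟨γ ^ n, hγn, ?_, (axis_pow htr hn.ne').symm⟩
    rw [gt_iff_lt, ← isHyperbolic_iff_four_lt_sq_trace]
    simpa using htr.pow (by simp) hn.ne'

/-- Commensurable subgroups of `SL(2, ℝ)` are isoaxial:
`ax(Γ₁) = ax(Γ₁ ∩ Γ₂) = ax(Γ₂)`. -/
theorem axes_commensurable (Γ₁ Γ₂ : Subgroup SL(2, ℝ))
    (h₁ : (Γ₁ ⊓ Γ₂).relIndex Γ₁ ≠ 0) (h₂ : (Γ₁ ⊓ Γ₂).relIndex Γ₂ ≠ 0) :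
    axes Γ₁ = axes (Γ₁ ⊓ Γ₂) ∧ axes (Γ₁ ⊓ Γ₂) = axes Γ₂ :=
  ⟨(axes_eq_of_le_of_relIndex_ne_zero inf_le_left h₁).symm,
    axes_eq_of_le_of_relIndex_ne_zero inf_le_right h₂⟩
end

section
/- Let A ∈ SL(2,ℝ) with (tr A)² > 4, and let ℓ denote the infimum over z ∈ ℍ of the hyperbolic displacement dist(z, A • z). Then ℓ > 0 and |tr A| = 2 cosh(ℓ / 2). -/
/-!
Write `A = !![a, b; c, d]` and `z = x + i y`. Since `z - A • z = (c z² + (d - a) z - b) / (c z + d)`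
and `Im (A • z) = y / |c z + d|²`, the formula for `sinh` of half the hyperbolic distance gives
`sinh² (dist z (A • z) / 2) = (tr² A - 4) / 4 + ((c |z|² + (d - a) x - b) / 2y)²`.
For hyperbolic `A` the second term vanishes on the axis of `A`, so the displacement is minimal
there, with `sinh² (ℓ / 2) = (tr² A - 4) / 4`, that is `cosh² (ℓ / 2) = tr² A / 4`.
-/

open UpperHalfPlane Matrix MatrixGroups

lemma SL2_det_fin_two {R : Type*} [CommRing R] (A : SL(2, R)) :
    A 0 0 * A 1 1 - A 0 1 * A 1 0 = 1 := by
  rw [← Matrix.det_fin_two]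
  exact A.det_coe

lemma coe_sub_coe_smul (A : SL(2, ℝ)) (z : ℍ) :
    (z : ℂ) - ↑(A • z) =
      (A 1 0 * (z : ℂ) ^ 2 + (A 1 1 - A 0 0) * z - A 0 1) / (A 1 0 * z + A 1 1) := by
  have hdenom : (A 1 0 * z + A 1 1 : ℂ) ≠ 0 := denom_ne_zero (SpecialLinearGroup.mapGL ℝ A) z
  simp only [coe_specialLinearGroup_apply, Algebra.algebraMap_self, RingHom.id_apply]
  rw [eq_div_iff hdenom, sub_mul, div_mul_cancel₀ _ hdenom]
  ring

lemma normSq_fixpoint_quadratic {a b c d : ℝ} (hdet : a * d - b * c = 1) (z : ℂ) :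
    Complex.normSq (c * z ^ 2 + (d - a) * z - b) =
      z.im ^ 2 * ((a + d) ^ 2 - 4) + (c * Complex.normSq z + (d - a) * z.re - b) ^ 2 := by
  simp only [Complex.normSq_apply, Complex.add_re, Complex.add_im, Complex.sub_re, Complex.sub_im,
    Complex.mul_re, Complex.mul_im, Complex.ofReal_re, Complex.ofReal_im, sq]
  linear_combination (-4 * z.im ^ 2) * hdet

/-- The zero set of `axisDefect A` is the axis of a hyperbolic `A`: the geodesic whose endpoints
are the roots of `c z² + (d - a) z - b`, i.e. the fixed points of `A` on `ℝ ∪ {∞}`. -/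
def axisDefect (A : SL(2, ℝ)) (z : ℍ) : ℝ :=
  A 1 0 * Complex.normSq z + (A 1 1 - A 0 0) * z.re - A 0 1

lemma sinh_sq_half_dist_smul (A : SL(2, ℝ)) (z : ℍ) :
    Real.sinh (dist z (A • z) / 2) ^ 2 =
      (A : Matrix (Fin 2) (Fin 2) ℝ).discr / 4 + (axisDefect A z / (2 * z.im)) ^ 2 := by
  have him : (A • z).im = z.im / Complex.normSq (A 1 0 * z + A 1 1) :=
    (z.im_smul_eq_div_normSq _).trans (by simp [denom])
  have hdenom : Complex.normSq (A 1 0 * z + A 1 1) ≠ 0 :=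
    normSq_denom_ne_zero (SpecialLinearGroup.mapGL ℝ A) z.im_ne_zero
  have hy := z.im_pos
  rw [sinh_half_dist, div_pow, mul_pow, Real.sq_sqrt (by positivity), Complex.dist_eq,
    Complex.sq_norm, coe_sub_coe_smul, Complex.normSq_div,
    normSq_fixpoint_quadratic (SL2_det_fin_two A), him, Matrix.discr_fin_two, A.det_coe,
    Matrix.trace_fin_two, axisDefect, coe_re, coe_im]
  field_simp
  ring

lemma exists_axisDefect_eq_zero {A : SL(2, ℝ)}
    (hA : (A : Matrix (Fin 2) (Fin 2) ℝ).IsHyperbolic) : ∃ z : ℍ, axisDefect A z = 0 := by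
  have hdet := SL2_det_fin_two A
  rw [Matrix.IsHyperbolic, Matrix.discr_fin_two, A.det_coe, Matrix.trace_fin_two] at hA
  set a := A 0 0
  set b := A 0 1
  set c := A 1 0
  set d := A 1 1
  suffices ∃ x y : ℝ, 0 < y ∧ c * (x ^ 2 + y ^ 2) + (d - a) * x - b = 0 by
    obtain ⟨x, y, hy, hxy⟩ := this
    exact ⟨⟨⟨x, y⟩, hy⟩, by simpa [axisDefect, Complex.normSq_apply, ← sq] using hxy⟩
  rcases eq_or_ne c 0 with hc | hc
  · have hda : d - a ≠ 0 := fun h ↦ by rw [hc] at hdet; nlinarith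
    exact ⟨b / (d - a), 1, one_pos, by rw [hc]; field_simp; ring⟩
  · refine ⟨(a - d) / (2 * c), √((a + d) ^ 2 - 4 * 1) / (2 * |c|), by positivity, ?_⟩
    rw [div_pow _ (2 * |c|), Real.sq_sqrt hA.le, mul_pow, sq_abs]
    field_simp
    linear_combination 4 * hdet

lemma dist_smul_le_of_axisDefect_eq_zero {A : SL(2, ℝ)} {z₀ : ℍ} (h₀ : axisDefect A z₀ = 0)
    (z : ℍ) : dist z₀ (A • z₀) ≤ dist z (A • z) := by
  have hsq : Real.sinh (dist z₀ (A • z₀) / 2) ^ 2 ≤ Real.sinh (dist z (A • z) / 2) ^ 2 := by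
    rw [sinh_sq_half_dist_smul, sinh_sq_half_dist_smul, h₀, zero_div, sq 0, mul_zero, add_zero]
    exact le_add_of_nonneg_right (sq_nonneg _)
  rw [sq_le_sq₀ (Real.sinh_nonneg_iff.mpr (by positivity))
    (Real.sinh_nonneg_iff.mpr (by positivity)), Real.sinh_le_sinh] at hsq
  linarith

/-- For a hyperbolic element `A ∈ SL(2, ℝ)`, the translation length
`ℓ = ⨅ z, dist z (A • z)` is positive and `|tr A| = 2 cosh (ℓ / 2)`. -/
theorem trace_eq_cosh_translation_length (A : SL(2, ℝ))
    (hA : ((A : Matrix (Fin 2) (Fin 2) ℝ).trace) ^ 2 > 4) :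
    0 < ⨅ z : ℍ, dist z (A • z) ∧
      |(A : Matrix (Fin 2) (Fin 2) ℝ).trace| =
        2 * Real.cosh ((⨅ z : ℍ, dist z (A • z)) / 2) := by
  set t := (A : Matrix (Fin 2) (Fin 2) ℝ).trace
  have hdiscr : (A : Matrix (Fin 2) (Fin 2) ℝ).discr = t ^ 2 - 4 := by
    rw [Matrix.discr_fin_two, A.det_coe, mul_one]
  have hhyp : (A : Matrix (Fin 2) (Fin 2) ℝ).IsHyperbolic := by
    rw [Matrix.IsHyperbolic, hdiscr]
    linarith
  obtain ⟨z₀, h₀⟩ := exists_axisDefect_eq_zero hhyp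
  have hinf : ⨅ z : ℍ, dist z (A • z) = dist z₀ (A • z₀) :=
    le_antisymm (ciInf_le ⟨0, by rintro _ ⟨z, rfl⟩; exact dist_nonneg⟩ z₀)
      (le_ciInf (dist_smul_le_of_axisDefect_eq_zero h₀))
  have hsinh : Real.sinh (dist z₀ (A • z₀) / 2) ^ 2 = (t ^ 2 - 4) / 4 := by
    simp [sinh_sq_half_dist_smul, h₀, hdiscr]
  rw [hinf]
  constructor
  · refine dist_nonneg.lt_of_ne fun h ↦ ?_
    rw [← h, zero_div, Real.sinh_zero] at hsinh
    linarith
  · rw [← sq_eq_sq₀ (abs_nonneg _) (by positivity), sq_abs, mul_pow, Real.cosh_sq', hsinh]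
    ring
end

section
/- Let Γ be a subgroup of SL(2,ℝ) and let S ⊆ ℍ be a subset containing at least two distinct points, which is closed in ℍ and discrete (as a topological subspace of ℍ), and which is invariant under Γ: for every γ ∈ Γ, the image γ • S equals S. Then Γ is a discrete subgroup of SL(2,ℝ) (i.e. Γ carries the discrete topology as a subspace of SL(2,ℝ)). -/
open UpperHalfPlane Matrix MatrixGroups Pointwise

/-- `SL(2, ℝ)` topologized as a subspace of the `2 × 2` real matrices. -/
noncomputable instance : TopologicalSpace SL(2, ℝ) :=
  TopologicalSpace.induced (fun g => (g : Matrix (Fin 2) (Fin 2) ℝ)) inferInstance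

/-!
An element of `SL(2, ℝ)` fixing a point of `ℍ` is central or elliptic, and an elliptic element
has exactly one fixed point; so the pointwise stabilizer of two distinct points `z, w` is the
finite centre `{±1}`. The orbit map `γ ↦ (γ • z, γ • w)` from `Γ` to the discrete set `S × S` is
continuous, so its fibre over `(z, w)` is an open neighbourhood of `1` in `Γ`; being finite, it
forces `{1}` to be open.
-/

section DiscreteSubgroup

variable {G : Type*} [Group G] [TopologicalSpace G] [IsTopologicalGroup G] [T1Space G]

theorem discreteTopology_of_continuous_of_finite_fiber {Y : Type*} [TopologicalSpace Y]
    [DiscreteTopology Y] {f : G → Y} (hf : Continuous f) (hfin : (f ⁻¹' {f 1}).Finite) :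
    DiscreteTopology G :=
  discreteTopology_iff_isOpen_singleton_one.mpr <|
    isOpen_singleton_of_finite_mem_nhds 1
      ((isOpen_discrete {f 1}).preimage hf |>.mem_nhds rfl) hfin

theorem Subgroup.discreteTopology_of_finite_stabilizer {X : Type*} [TopologicalSpace X]
    [MulAction G X] [ContinuousSMul G X] (Γ : Subgroup G) {S : Set X} [DiscreteTopology S]
    (hS : ∀ γ ∈ Γ, ∀ x ∈ S, γ • x ∈ S) {x : X} (hx : x ∈ S)
    (hfin : (MulAction.stabilizer G x : Set G).Finite) : DiscreteTopology Γ := by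
  let orbitMap : Γ → S := fun γ => ⟨(γ : G) • x, hS γ γ.2 x hx⟩
  refine discreteTopology_of_continuous_of_finite_fiber (f := orbitMap) (by fun_prop) ?_
  refine (hfin.preimage Subtype.val_injective.injOn).subset fun γ hγ => ?_
  simpa [orbitMap, Subtype.ext_iff] using hγ

end DiscreteSubgroup

theorem Matrix.SpecialLinearGroup.finite_center {n R : Type*} [Fintype n] [DecidableEq n]
    [Nonempty n] [CommRing R] [IsDomain R] :
    (Subgroup.center (SpecialLinearGroup n R) : Set (SpecialLinearGroup n R)).Finite :=
  Set.finite_coe_iff.mp <|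
    .of_equiv _ (center_equiv_rootsOfUnity' (Classical.arbitrary n)).symm.toEquiv

theorem UpperHalfPlane.mem_center_of_smul_eq_self_of_smul_eq_self {g : SL(2, ℝ)} {z w : ℍ}
    (hzw : z ≠ w) (hz : g • z = z) (hw : g • w = w) : g ∈ Subgroup.center SL(2, ℝ) := by
  have hdet : 0 < (SpecialLinearGroup.mapGL ℝ g).val.det := by simp
  by_contra hg
  have hgGL : SpecialLinearGroup.mapGL ℝ g ∉ Subgroup.center (GL (Fin 2) ℝ) := by
    refine fun hc => hg (Subgroup.mem_center_iff.mpr fun h => ?_)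
    apply SpecialLinearGroup.mapGL_injective (S := ℝ)
    simpa using Subgroup.mem_center_iff.mp hc (SpecialLinearGroup.mapGL ℝ h)
  have hell := isElliptic_of_exists_smul_eq_self hdet hgGL ⟨z, hz⟩
  have hz' := (gl_smul_eq_self_iff_eq_fixedPt hdet hell).mp hz
  have hw' := (gl_smul_eq_self_iff_eq_fixedPt hdet hell).mp hw
  exact hzw (hz'.trans hw'.symm)

theorem discrete_of_invariant_discrete_set_general (Γ : Subgroup SL(2, ℝ)) (S : Set ℍ)
    (htwo : ∃ z w : ℍ, z ∈ S ∧ w ∈ S ∧ z ≠ w)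
    (hdisc : DiscreteTopology S)
    (hinv : ∀ γ ∈ Γ, γ • S = S) :
    DiscreteTopology Γ := by
  obtain ⟨z, w, hz, hw, hzw⟩ := htwo
  -- The topology on `SL(2, ℝ)` above is definitionally Mathlib's, so its instances transfer.
  have : T1Space SL(2, ℝ) := SpecialLinearGroup.instT1Space
  have : IsTopologicalGroup SL(2, ℝ) := SpecialLinearGroup.topologicalGroup
  have : ContinuousSMul SL(2, ℝ) ℍ := instContinuousSMulSL2R
  have : DiscreteTopology (S ×ˢ S) := (Homeomorph.Set.prod S S).symm.discreteTopology
  have hS : ∀ γ ∈ Γ, ∀ x ∈ S, γ • x ∈ S := fun γ hγ x hx =>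
    hinv γ hγ ▸ Set.smul_mem_smul_set hx
  refine Γ.discreteTopology_of_finite_stabilizer (S := S ×ˢ S)
    (fun γ hγ p hp => ⟨hS γ hγ _ hp.1, hS γ hγ _ hp.2⟩) (x := (z, w)) ⟨hz, hw⟩ ?_
  exact SpecialLinearGroup.finite_center.subset fun g hg =>
    mem_center_of_smul_eq_self_of_smul_eq_self hzw congr(Prod.fst $hg) congr(Prod.snd $hg)

/-- Discreteness criterion: if a subgroup `Γ` of `SL(2, ℝ)` leaves invariant a closed
discrete subset of `ℍ` containing at least two points, then `Γ` is a discrete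
subgroup of `SL(2, ℝ)`. -/
theorem discrete_of_invariant_discrete_set (Γ : Subgroup SL(2, ℝ)) (S : Set ℍ)
    (htwo : ∃ z w : ℍ, z ∈ S ∧ w ∈ S ∧ z ≠ w)
    (hclosed : IsClosed S) (hdisc : DiscreteTopology S)
    (hinv : ∀ γ ∈ Γ, γ • S = S) :
    DiscreteTopology Γ :=
  discrete_of_invariant_discrete_set_general Γ S htwo hdisc hinv
end
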